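/- arXiv:math-ph/0312071 — 2 statements merged into one kernel-verified Lean document; each statement's English description precedes it below -/
import Mathlib

section
/- For n ≥ 1, let P(n; u₁,…,u_{2n}) be the 2n × 2n matrix whose (k,ν) entry is u_ν^{e_k}, where (e_1, e_2, …, e_{2n}) = (3n−2, 3n−4, 3n−8, 3n−10, …, −3n+4, −3n+2) are the integers in [−3n+2, 3n−2] congruent to 3n−2 or 3n−4 modulo 6, listed decreasingly. Then det P(n; u₁,…,u_{2n−1}, a·u_{2n−1}) = (−1)ⁿ σ(a) · ∏_{μ=1}^{2n−2} σ(u_μ³ u_{2n−1}^{−3}) · det P(n−1; u₁,…,u_{2n−2}), where a = exp(iπ/3) and σ(x) = x − x⁻¹. -/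
noncomputable def sig (x : ℂ) : ℂ := x - x⁻¹

noncomputable def aC : ℂ := Complex.exp (Complex.I * Real.pi / 3)

/-- The exponent sequence (3n−2, 3n−4, 3n−8, 3n−10, …, −3n+4, −3n+2),
0-indexed by j: for j even the exponent is 3n−2−3j, for j odd it is 3n−1−3j. -/
def expP (n j : ℕ) : ℤ :=
  if j % 2 = 0 then 3 * (n : ℤ) - 2 - 3 * j else 3 * (n : ℤ) - 1 - 3 * j

/-!
Write `U = u (2n-2)`. The exponents satisfy `e_{k+2} = e_k - 6`, and `(a U)⁶ = U⁶` because
`a⁶ = 1`. Hence subtracting `U⁶` times row `k + 2` from row `k`, for the first `2n - 2` rows (a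
unitriangular row operation), kills the last two columns in those rows, and the determinant
splits into two diagonal blocks. Since `x^{e+6} - U⁶ x^e = x^{e+3} · U³ σ(x³ U⁻³)`, the upper
block is `P(n-1)` with column `μ` scaled by `U³ σ(u_μ³ U⁻³)`; the lower block is
`[[U^{4-3n}, (aU)^{4-3n}], [U^{2-3n}, (aU)^{2-3n}]]`, whose determinant is
`(-1)ⁿ σ(a) U^{6-6n}` because `a³ = -1`. The powers of `U` cancel.
-/

namespace Matrix

open Finset

variable {R : Type*} [CommRing R]

theorem det_of_sub_smul_shifted_rows {N d : ℕ} (hd : 0 < d) (r : ℕ → Fin N → R) (c : R) :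
    det (of fun k : Fin N => if (k : ℕ) + d < N then r k - c • r (k + d) else r k)
      = det (of fun k : Fin N => r k) := by
  set S : Matrix (Fin N) (Fin N) R := of fun k j => if (k : ℕ) + d = j then 1 else 0
  have hS : ∀ k ν, (S * of fun k : Fin N => r k) k ν
      = if (k : ℕ) + d < N then r (k + d) ν else 0 := by
    intro k ν
    simp only [S, mul_apply, of_apply, ite_mul, one_mul, zero_mul]
    rw [Fin.sum_univ_eq_sum_range (fun j => if (k : ℕ) + d = j then r j ν else 0),
      sum_ite_eq]
    simp
  have hL : det (1 - c • S) = 1 := by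
    rw [det_of_isUpperTriangular]
    · refine prod_eq_one fun i _ => ?_
      simp [S, hd.ne']
    · intro i j hji
      have hji : (j : ℕ) < i := hji
      simp [S, Fin.ext_iff, hji.ne', show (i : ℕ) + d ≠ j by omega]
  rw [← one_mul (det (of fun k : Fin N => r k)), ← hL, ← det_mul]
  congr 1
  ext k ν
  rw [Matrix.sub_mul, Matrix.one_mul, Matrix.sub_apply, Matrix.smul_mul, Matrix.smul_apply, hS]
  by_cases hk : (k : ℕ) + d < N <;> simp [hk]

theorem det_eq_det_castAdd_mul_det_natAdd {p q : ℕ} (M : Matrix (Fin (p + q)) (Fin (p + q)) R)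
    (h : ∀ i j, M (Fin.castAdd q i) (Fin.natAdd p j) = 0) :
    M.det = (M.submatrix (Fin.castAdd q) (Fin.castAdd q)).det
      * (M.submatrix (Fin.natAdd p) (Fin.natAdd p)).det := by
  rw [← det_submatrix_equiv_self finSumFinEquiv,
    ← det_fromBlocks_zero₁₂ _ (M.submatrix (Fin.natAdd p) (Fin.castAdd q))]
  congr 1
  ext (i | i) (j | j) <;> simp [h]

end Matrix

open Finset

theorem aC_ne_zero : aC ≠ 0 := Complex.exp_ne_zero _

theorem aC_pow_three : aC ^ 3 = -1 := by
  rw [aC, ← Complex.exp_nat_mul, ← Complex.exp_pi_mul_I]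
  congr 1
  push_cast
  ring

theorem aC_pow_six : aC ^ 6 = 1 := by
  rw [show 6 = 3 * 2 from rfl, pow_mul, aC_pow_three]
  norm_num

theorem aC_zpow_neg_three_mul (m : ℕ) : aC ^ (-3 * m : ℤ) = (-1) ^ m := by
  rw [show (-3 * m : ℤ) = (3 * m : ℕ) * (-1) by push_cast; ring, zpow_mul, zpow_natCast,
    pow_mul, aC_pow_three, zpow_neg_one, ← inv_pow, inv_neg, inv_one]

theorem aC_zpow_sub_aC_zpow (m : ℕ) :
    aC ^ (-1 - 3 * m : ℤ) - aC ^ (1 - 3 * m : ℤ) = (-1) ^ (m + 1) * sig aC := by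
  rw [show (-1 - 3 * m : ℤ) = -3 * m + -1 by ring, show (1 - 3 * m : ℤ) = -3 * m + 1 by ring,
    zpow_add₀ aC_ne_zero, zpow_add₀ aC_ne_zero, aC_zpow_neg_three_mul, zpow_neg_one, zpow_one,
    sig, pow_succ]
  ring

theorem expP_add_two (n k : ℕ) : expP n (k + 2) = expP n k - 6 := by
  simp only [expP, Nat.add_mod_right]
  split_ifs <;> push_cast <;> ring

theorem expP_succ (n k : ℕ) : expP (n + 1) k = expP n k + 3 := by
  unfold expP
  split_ifs <;> push_cast <;> ring

theorem expP_succ_two_mul (m : ℕ) : expP (m + 1) (2 * m) = 1 - 3 * m := by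
  simp only [expP, Nat.mul_mod_right, if_true]
  push_cast; ring

theorem expP_succ_two_mul_add_one (m : ℕ) : expP (m + 1) (2 * m + 1) = -1 - 3 * m := by
  simp only [expP, Nat.mul_add_mod]
  push_cast; ring

theorem zpow_sub_mul_zpow_sub {K : Type*} [DivisionRing K] {x : K} (hx : x ≠ 0) (c : K)
    (e d : ℤ) : x ^ e - c * x ^ (e - d) = (x ^ d - c) * x ^ (e - d) := by
  rw [sub_mul, ← zpow_add₀ hx, add_sub_cancel]

theorem pow_six_sub_pow_six {x y : ℂ} (hx : x ≠ 0) (hy : y ≠ 0) :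
    x ^ 6 - y ^ 6 = x ^ 3 * y ^ 3 * sig (x ^ 3 * y ^ (-3 : ℤ)) := by
  rw [sig, zpow_neg, zpow_ofNat]
  field_simp

theorem zpow_sub_six_eq_zero {K : Type*} [DivisionRing K] {x y : K} (hx : x ≠ 0)
    (h : x ^ 6 = y ^ 6) (e : ℤ) : x ^ e - y ^ 6 * x ^ (e - 6) = 0 := by
  rw [zpow_sub_mul_zpow_sub hx, zpow_ofNat, h, sub_self, zero_mul]

theorem zpow_add_three_sub_six {x y : ℂ} (hx : x ≠ 0) (hy : y ≠ 0) (f : ℤ) :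
    x ^ (f + 3) - y ^ 6 * x ^ (f + 3 - 6) = y ^ 3 * sig (x ^ 3 * y ^ (-3 : ℤ)) * x ^ f := by
  rw [zpow_sub_mul_zpow_sub hx, zpow_ofNat, pow_six_sub_pow_six hx hy,
    show f + 3 - 6 = f + -3 by ring, zpow_add₀ hx, zpow_neg, zpow_ofNat]
  field_simp

theorem det_aC_corner {U : ℂ} (hU : U ≠ 0) (m : ℕ) :
    !![U ^ (1 - 3 * m : ℤ), (aC * U) ^ (1 - 3 * m : ℤ);
      U ^ (-1 - 3 * m : ℤ), (aC * U) ^ (-1 - 3 * m : ℤ)].det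
      = (-1) ^ (m + 1) * sig aC * ((U ^ 3) ^ (2 * m))⁻¹ := by
  have hU : U ^ (1 - 3 * m : ℤ) * U ^ (-1 - 3 * m : ℤ) = ((U ^ 3) ^ (2 * m))⁻¹ := by
    rw [← zpow_add₀ hU, ← pow_mul, ← zpow_natCast, ← zpow_neg]
    push_cast; ring_nf
  rw [Matrix.det_fin_two_of, mul_zpow, mul_zpow, ← aC_zpow_sub_aC_zpow, ← hU]
  ring

noncomputable def pMatrix (n : ℕ) (u : ℕ → ℂ) : Matrix (Fin (2 * n)) (Fin (2 * n)) ℂ :=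
  Matrix.of fun k ν => u ν ^ expP n k

theorem det_pMatrix_succ (m : ℕ) (u : ℕ → ℂ) (hu : ∀ i, u i ≠ 0)
    (hlast : u (2 * m + 1) = aC * u (2 * m)) :
    (pMatrix (m + 1) u).det = (-1) ^ (m + 1) * sig aC
      * (∏ μ ∈ range (2 * m), sig (u μ ^ 3 * u (2 * m) ^ (-3 : ℤ))) * (pMatrix m u).det := by
  set U := u (2 * m)
  have hU : U ≠ 0 := hu _
  set r : ℕ → Fin (2 * m + 2) → ℂ := fun k ν => u ν ^ expP (m + 1) k
  set Q : Matrix (Fin (2 * m + 2)) (Fin (2 * m + 2)) ℂ :=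
    .of fun k => if (k : ℕ) + 2 < 2 * m + 2 then r k - U ^ 6 • r (k + 2) else r k
  have hQ : (pMatrix (m + 1) u).det = Q.det :=
    (Matrix.det_of_sub_smul_shifted_rows two_pos r _).symm
  have hcorner : ∀ i j, Q (Fin.castAdd 2 i) (Fin.natAdd (2 * m) j) = 0 := by
    intro i j
    have h6 : u (2 * m + j) ^ 6 = U ^ 6 := by
      fin_cases j
      · rfl
      · simp [hlast, mul_pow, aC_pow_six, U]
    simpa [Q, r, expP_add_two] using zpow_sub_six_eq_zero (hu _) h6 _
  have htl : Q.submatrix (Fin.castAdd 2) (Fin.castAdd 2)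
      = .of fun k ν => (U ^ 3 * sig (u ν ^ 3 * U ^ (-3 : ℤ))) * pMatrix m u k ν := by
    ext k ν
    have hk : (k : ℕ) + 2 < 2 * m + 2 := by omega
    simp only [Q, r, pMatrix, Matrix.submatrix_apply, Matrix.of_apply, Fin.val_castAdd, hk,
      if_true, Pi.sub_apply, Pi.smul_apply, smul_eq_mul]
    rw [expP_add_two, expP_succ]
    exact zpow_add_three_sub_six (hu ν) hU _
  have hbr : Q.submatrix (Fin.natAdd (2 * m)) (Fin.natAdd (2 * m))
      = !![U ^ (1 - 3 * m : ℤ), (aC * U) ^ (1 - 3 * m : ℤ);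
          U ^ (-1 - 3 * m : ℤ), (aC * U) ^ (-1 - 3 * m : ℤ)] := by
    ext i j
    fin_cases i <;> fin_cases j <;>
      simp [Q, r, U, expP_succ_two_mul, expP_succ_two_mul_add_one, hlast]
  rw [hQ, Matrix.det_eq_det_castAdd_mul_det_natAdd Q hcorner, htl, Matrix.det_mul_row, hbr,
    det_aC_corner hU, prod_mul_distrib, prod_const, card_univ, Fintype.card_fin,
    Fin.prod_univ_eq_prod_range (fun ν => sig (u ν ^ 3 * U ^ (-3 : ℤ)))]
  have : (U ^ 3) ^ (2 * m) ≠ 0 := by positivity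
  field_simp

theorem stmt_8 (n : ℕ) (hn : 2 ≤ n) (u : ℕ → ℂ) (hu : ∀ i, u i ≠ 0)
    (hlast : u (2 * n - 1) = aC * u (2 * n - 2)) :
    Matrix.det (Matrix.of fun k ν : Fin (2 * n) => u (ν : ℕ) ^ expP n (k : ℕ))
      = (-1) ^ n * sig aC
          * (∏ μ ∈ Finset.range (2 * n - 2), sig (u μ ^ 3 * (u (2 * n - 2)) ^ (-3 : ℤ)))
          * Matrix.det (Matrix.of fun k ν : Fin (2 * (n - 1)) =>
              u (ν : ℕ) ^ expP (n - 1) (k : ℕ)) := by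
  obtain ⟨m, rfl⟩ : ∃ m, n = m + 1 := ⟨n - 1, by omega⟩
  exact det_pMatrix_succ m u hu hlast
end

section
/- For n = 1, the weighted U-turn ASM count satisfies A_U(2; 1, y) = 1 + y, and consequently, assuming the recurrence A_U(2n; 1, y)/A_U(2n−2; 1, y) = (1/2)(1+y)·A(2n)/A(2n−1), one has A_U(2n; 1, y) = (1/2ⁿ)(1+y)ⁿ ∏_{k=1}^{n} A(2k)/A(2k−1) = (1/2ⁿ)(1+y)ⁿ ∏_{k=1}^{n} (6k−2)!(2k−1)!/((4k−1)!(4k−2)!). -/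
theorem stmt_15 (A : ℕ → ℝ) (y : ℝ)
    (hApos : ∀ m, 0 < A m)
    (hA1 : A 1 = 1)
    (hA : ∀ m, 2 ≤ m →
      A m / A (m - 1) =
        ((3 * m - 2).factorial * (m - 1).factorial : ℝ)
          / ((2 * m - 1).factorial * (2 * m - 2).factorial))
    (AU : ℕ → ℝ)  -- AU n stands for A_U(2n; 1, y)
    (hAU1 : AU 1 = 1 + y)
    (hAUrec : ∀ n, 2 ≤ n →
      AU n = (1 / 2) * (1 + y) * (A (2 * n) / A (2 * n - 1)) * AU (n - 1)) :
    ∀ n, 1 ≤ n →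
      AU n = (1 / 2 ^ n) * (1 + y) ^ n * ∏ k ∈ Finset.Icc 1 n, A (2 * k) / A (2 * k - 1)
        ∧ AU n = (1 / 2 ^ n) * (1 + y) ^ n *
            ∏ k ∈ Finset.Icc 1 n,
              ((6 * k - 2).factorial * (2 * k - 1).factorial : ℝ)
                / ((4 * k - 1).factorial * (4 * k - 2).factorial) := by
  have hterm : ∀ k, 1 ≤ k → A (2 * k) / A (2 * k - 1) =
      ((6 * k - 2).factorial * (2 * k - 1).factorial : ℝ)
        / ((4 * k - 1).factorial * (4 * k - 2).factorial) := by
    intro k hk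
    have h := hA (2 * k) (by omega)
    have e1 : 3 * (2 * k) - 2 = 6 * k - 2 := by omega
    have e2 : 2 * k - 1 = 2 * k - 1 := rfl
    have e3 : 2 * (2 * k) - 1 = 4 * k - 1 := by omega
    have e4 : 2 * (2 * k) - 2 = 4 * k - 2 := by omega
    rw [e1, e3, e4] at h
    exact h
  have main : ∀ n, 1 ≤ n →
      AU n = (1 / 2 ^ n) * (1 + y) ^ n * ∏ k ∈ Finset.Icc 1 n, A (2 * k) / A (2 * k - 1) := by
    intro n hn
    induction n with
    | zero => omega
    | succ m ih =>
      rcases Nat.eq_or_lt_of_le hn with h1 | h1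
      · -- m + 1 = 1
        have hm : m = 0 := by omega
        subst hm
        have hA2 : A 2 = 2 := by
          have h := hA 2 le_rfl
          rw [show (2:ℕ)-1 = 1 from rfl, hA1] at h
          norm_num [Nat.factorial] at h
          linarith
        rw [hAU1, Finset.Icc_self, Finset.prod_singleton]
        norm_num [hA1, hA2]
        ring
      · have hm : 1 ≤ m := by omega
        have hrec := hAUrec (m + 1) (by omega)
        simp only [Nat.add_sub_cancel] at hrec
        rw [hrec, ih hm]
        rw [Finset.prod_Icc_succ_top (by omega : 1 ≤ m + 1)]
        ring
  intro n hn
  refine ⟨main n hn, ?_⟩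
  rw [main n hn]
  congr 1
  apply Finset.prod_congr rfl
  intro k hk
  exact hterm k (Finset.mem_Icc.mp hk).1
end
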